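/- There exists a constant C₁ > 0, depending only on J, such that for all (ρ, z) with ρ > 0 the extreme Kerr data satisfy |∂Y₀|² ≤ C₁ X₀² r⁻² (equivalently, |∂Y₀|² / X₀² ≤ C₁ r⁻²). -/

import Mathlib

open Real MeasureTheory

noncomputable section

/-- Partial derivative with respect to ρ (the first coordinate) of an
axisymmetric function, viewed as a function of (ρ, z). -/
def pdR (f : ℝ × ℝ → ℝ) (p : ℝ × ℝ) : ℝ := fderiv ℝ f p (1, 0)

/-- Partial derivative with respect to z (the second coordinate). -/
def pdZ (f : ℝ × ℝ → ℝ) (p : ℝ × ℝ) : ℝ := fderiv ℝ f p (0, 1)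

/-- |∂f|² = f_{,ρ}² + f_{,z}². -/
def gradSq (f : ℝ × ℝ → ℝ) (p : ℝ × ℝ) : ℝ := (pdR f p) ^ 2 + (pdZ f p) ^ 2

/-- ∂f·∂g = f_{,ρ} g_{,ρ} + f_{,z} g_{,z}. -/
def gradDot (f g : ℝ × ℝ → ℝ) (p : ℝ × ℝ) : ℝ :=
  pdR f p * pdR g p + pdZ f p * pdZ g p

/-- The flat Laplacian of ℝ³ acting on axisymmetric functions:
Δf = f_{,ρρ} + ρ⁻¹ f_{,ρ} + f_{,zz}. -/
def lap (f : ℝ × ℝ → ℝ) (p : ℝ × ℝ) : ℝ :=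
  pdR (pdR f) p + (p.1)⁻¹ * pdR f p + pdZ (pdZ f) p

/-- The flat divergence of ℝ³ of an axisymmetric vector field (Wρ, Wz):
div W = ρ⁻¹ (ρ Wρ)_{,ρ} + Wz_{,z} = Wρ_{,ρ} + ρ⁻¹ Wρ + Wz_{,z}. -/
def divg (Wr Wz : ℝ × ℝ → ℝ) (p : ℝ × ℝ) : ℝ :=
  pdR Wr p + (p.1)⁻¹ * Wr p + pdZ Wz p

/-- The half-plane {ρ > 0} of (ρ, z), representing ℝ³ in cylindrical coordinates. -/
def HP : Set (ℝ × ℝ) := {p | 0 < p.1}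

/-- Ω_{ρ₀} = {ρ > ρ₀}, the exterior of the solid cylinder of radius ρ₀. -/
def Om (ρ₀ : ℝ) : Set (ℝ × ℝ) := {p | ρ₀ < p.1}

/-- ∫_{ℝ³} h dμ for an axisymmetric integrand h, where dμ = ρ dρ dz dφ. -/
def intR3 (h : ℝ × ℝ → ℝ) : ℝ := (2 * π) * ∫ p in HP, h p * p.1

/-- ∫_{Ω_{ρ₀}} h dμ for an axisymmetric integrand h. -/
def intOm (ρ₀ : ℝ) (h : ℝ × ℝ → ℝ) : ℝ := (2 * π) * ∫ p in Om ρ₀, h p * p.1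

/-- The mass functional M(v, Y) = (1/(32π)) ∫_{ℝ³} (|∂v|² + ρ⁻⁴ e^{−2v} |∂Y|²) dμ. -/
def MF (v Y : ℝ × ℝ → ℝ) : ℝ :=
  (1 / (32 * π)) *
    intR3 (fun p => gradSq v p + (p.1 ^ 4)⁻¹ * Real.exp (-2 * v p) * gradSq Y p)

/-- r = √(ρ² + z²). -/
def rr (p : ℝ × ℝ) : ℝ := Real.sqrt (p.1 ^ 2 + p.2 ^ 2)

/-- cos θ = z / r. -/
def cosT (p : ℝ × ℝ) : ℝ := p.2 / rr p

/-- sin²θ = ρ² / r². -/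
def sin2T (p : ℝ × ℝ) : ℝ := p.1 ^ 2 / (rr p) ^ 2

/-- r̃ = r + √|J|. -/
def rt (J : ℝ) (p : ℝ × ℝ) : ℝ := rr p + Real.sqrt |J|

/-- Σ = r̃² + |J| cos²θ. -/
def Sg (J : ℝ) (p : ℝ × ℝ) : ℝ := (rt J p) ^ 2 + |J| * (cosT p) ^ 2

/-- The extreme Kerr potential Y₀. -/
def Y0 (J : ℝ) (p : ℝ × ℝ) : ℝ :=
  2 * J * ((cosT p) ^ 3 - 3 * cosT p) - 2 * J ^ 2 * cosT p * (sin2T p) ^ 2 / Sg J p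

/-- The extreme Kerr Killing norm X₀. -/
def X0 (J : ℝ) (p : ℝ × ℝ) : ℝ :=
  (((rt J p) ^ 2 + |J|) ^ 2 - (rr p) ^ 2 * |J| * sin2T p) * sin2T p / Sg J p

/-- The extreme Kerr function v₀ = ln X₀ − 2 ln ρ, so that X₀ = ρ² e^{v₀}. -/
def v0 (J : ℝ) (p : ℝ × ℝ) : ℝ := Real.log (X0 J p) - 2 * Real.log p.1

/-- σ = √(r² + 1). -/
def sgm (p : ℝ × ℝ) : ℝ := Real.sqrt ((rr p) ^ 2 + 1)

/-- The pointwise weighted C¹ quantity σ^{−β}|f| + σ^{−β+1}|∂f|. -/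
def wFn (β : ℝ) (f : ℝ × ℝ → ℝ) (p : ℝ × ℝ) : ℝ :=
  sgm p ^ (-β) * |f p| + sgm p ^ (-β + 1) * Real.sqrt (gradSq f p)

/-- The weighted norm ‖f‖_{C¹_β(Ω)} = sup_Ω (σ^{−β}|f| + σ^{−β+1}|∂f|). -/
def C1norm (β : ℝ) (Ω : Set (ℝ × ℝ)) (f : ℝ × ℝ → ℝ) : ℝ :=
  sSup (wFn β f '' Ω)

/-- The Banach space 𝓑: pairs φ = (α, y) of axisymmetric C¹ functions with
y ≡ 0 on {ρ ≤ ρ₀} and finite norm ‖φ‖_𝓑 = ‖α‖_{C¹_β(ℝ³)} + ‖y‖_{C¹_β(Ω_{ρ₀})}. -/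
structure Bsp (ρ₀ β : ℝ) where
  a : ℝ × ℝ → ℝ
  y : ℝ × ℝ → ℝ
  ha : ContDiff ℝ 1 a
  hy : ContDiff ℝ 1 y
  hy0 : ∀ p : ℝ × ℝ, p.1 ≤ ρ₀ → y p = 0
  hba : BddAbove (wFn β a '' HP)
  hby : BddAbove (wFn β y '' Om ρ₀)

/-- The norm of 𝓑. -/
def Bnorm (ρ₀ β : ℝ) (φ : Bsp ρ₀ β) : ℝ :=
  C1norm β HP φ.a + C1norm β (Om ρ₀) φ.y

/-- i_φ(t) = M(u₀ + tφ) = M(v₀ + tα, Y₀ + ty). -/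
def iF (J ρ₀ β : ℝ) (φ : Bsp ρ₀ β) (t : ℝ) : ℝ :=
  MF (fun p => v0 J p + t * φ.a p) (fun p => Y0 J p + t * φ.y p)

/-- ‖α‖²_{H₁} = ∫_{ℝ³} |∂α|² dμ + ∫_{ℝ³} α² r⁻² dμ. -/
def H1sq (a : ℝ × ℝ → ℝ) : ℝ :=
  intR3 (fun p => gradSq a p) + intR3 (fun p => (a p) ^ 2 * ((rr p) ^ 2)⁻¹)

/-- ‖y‖²_{H₂} = ∫_{Ω_{ρ₀}} |∂y|² ρ⁻⁴ dμ + ∫_{Ω_{ρ₀}} y² ρ⁻⁶ dμ. -/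
def H2sq (ρ₀ : ℝ) (y : ℝ × ℝ → ℝ) : ℝ :=
  intOm ρ₀ (fun p => gradSq y p * (p.1 ^ 4)⁻¹) +
    intOm ρ₀ (fun p => (y p) ^ 2 * (p.1 ^ 6)⁻¹)

/-- ‖φ‖²_𝓗 = ‖α‖²_{H₁} + ‖y‖²_{H₂}. -/
def Hsq (ρ₀ β : ℝ) (φ : Bsp ρ₀ β) : ℝ := H1sq φ.a + H2sq ρ₀ φ.y

/-!
Write c = cos θ. Away from the origin the potential is a rational function of (c, r), with
sin²θ = 1 - c². Since |∂r| = 1, ∂r ⊥ ∂c and |∂c|² = sin²θ / r², the chain rule gives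
|∂Y₀|² = (∂_c Y)² sin²θ / r² + (∂_r Y)². Using Σ ≥ r̃² ≥ |J| one finds |∂_c Y| ≤ 18 |J| sin²θ and
r |∂_r Y| ≤ 4 |J| sin²θ, while X₀ ≥ |J| sin²θ. Hence |∂Y₀|² ≤ 340 X₀² r⁻².
-/

open Filter Topology ContinuousLinearMap

def kerrSigma (J c r : ℝ) : ℝ := (r + √|J|) ^ 2 + |J| * c ^ 2

/-- `Y0` written in the variables `c = cos θ` and `r`. -/
def kerrY (J c r : ℝ) : ℝ :=
  2 * J * (c ^ 3 - 3 * c) - 2 * J ^ 2 * c * (1 - c ^ 2) ^ 2 / kerrSigma J c r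

def kerrYDerivC (J c r : ℝ) : ℝ :=
  -6 * J * (1 - c ^ 2) - 2 * J ^ 2 * (1 - c ^ 2) * (1 - 5 * c ^ 2) / kerrSigma J c r
    + 4 * J ^ 2 * |J| * c ^ 2 * (1 - c ^ 2) ^ 2 / kerrSigma J c r ^ 2

def kerrYDerivR (J c r : ℝ) : ℝ :=
  4 * J ^ 2 * c * (1 - c ^ 2) ^ 2 * (r + √|J|) / kerrSigma J c r ^ 2

theorem kerrSigma_pos (J c : ℝ) {r : ℝ} (hr : 0 < r) : 0 < kerrSigma J c r := by
  unfold kerrSigma; positivity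

theorem abs_le_kerrSigma (J c : ℝ) {r : ℝ} (hr : 0 ≤ r) : |J| ≤ kerrSigma J c r := by
  have : |J| ≤ (r + √|J|) ^ 2 := by
    nlinarith [Real.sq_sqrt (abs_nonneg J), Real.sqrt_nonneg |J|]
  unfold kerrSigma; nlinarith [abs_nonneg J, sq_nonneg c]

theorem HasFDerivAt.kerrY {E : Type*} [NormedAddCommGroup E] [NormedSpace ℝ E] {c r : E → ℝ}
    {c' r' : E →L[ℝ] ℝ} {x : E} (J : ℝ) (hc : HasFDerivAt c c' x) (hr : HasFDerivAt r r' x)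
    (hS : kerrSigma J (c x) (r x) ≠ 0) :
    HasFDerivAt (fun y => _root_.kerrY J (c y) (r y))
      (kerrYDerivC J (c x) (r x) • c' + kerrYDerivR J (c x) (r x) • r') x := by
  have hS' : HasFDerivAt (fun y => kerrSigma J (c y) (r y))
      ((2 * (r x + √|J|)) • r' + (|J| * (2 * c x)) • c') x :=
    (((hr.add_const √|J|).pow 2).add ((hc.pow 2).const_mul |J|)).congr_fderiv
      (ContinuousLinearMap.ext fun v => by
        simp only [Nat.add_one_sub_one, pow_one, smul_add, nsmul_eq_mul, Nat.cast_ofNat, add_apply,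
          smul_apply, smul_eq_mul]
        ring)
  have h : HasFDerivAt (fun y => 2 * J * (c y ^ 3 - 3 * c y)
      - 2 * J ^ 2 * c y * (1 - c y ^ 2) ^ 2 * (kerrSigma J (c y) (r y))⁻¹) _ x :=
    (((hc.pow 3).sub (hc.const_mul 3)).const_mul (2 * J)).sub
      (((hc.const_mul (2 * J ^ 2)).mul ((hc.pow 2).const_sub 1 |>.pow 2)).mul
        ((hasDerivAt_inv hS).comp_hasFDerivAt x hS'))
  simp only [_root_.kerrY, div_eq_mul_inv]
  refine h.congr_fderiv (ContinuousLinearMap.ext fun v => ?_)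
  simp only [Nat.add_one_sub_one, nsmul_eq_mul, Nat.cast_ofNat, Pi.mul_apply, smul_add, neg_smul,
    smul_neg, pow_one, sub_apply, smul_apply, smul_eq_mul, add_apply, neg_apply, kerrYDerivC,
    kerrYDerivR]
  field_simp
  ring

theorem rr_sq (p : ℝ × ℝ) : rr p ^ 2 = p.1 ^ 2 + p.2 ^ 2 :=
  Real.sq_sqrt (by positivity)

theorem rr_pos {p : ℝ × ℝ} (hp : p ≠ 0) : 0 < rr p := by
  refine Real.sqrt_pos.2 (lt_of_le_of_ne (by positivity) fun h => hp ?_)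
  have h1 : p.1 ^ 2 = 0 := by linarith [sq_nonneg p.1, sq_nonneg p.2]
  have h2 : p.2 ^ 2 = 0 := by linarith [sq_nonneg p.1, sq_nonneg p.2]
  exact Prod.ext (pow_eq_zero_iff two_ne_zero |>.1 h1) (pow_eq_zero_iff two_ne_zero |>.1 h2)

theorem sin2T_nonneg (p : ℝ × ℝ) : 0 ≤ sin2T p := by
  unfold sin2T; positivity

theorem sin2T_eq_one_sub_cosT_sq {p : ℝ × ℝ} (hp : p ≠ 0) : sin2T p = 1 - cosT p ^ 2 := by
  have hr := rr_pos hp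
  rw [sin2T, cosT]
  field_simp
  linear_combination -rr_sq p

theorem hasFDerivAt_rr {p : ℝ × ℝ} (hp : p ≠ 0) :
    HasFDerivAt rr ((rr p)⁻¹ • (p.1 • fst ℝ ℝ ℝ + p.2 • snd ℝ ℝ ℝ)) p := by
  have h0 : p.1 ^ 2 + p.2 ^ 2 ≠ 0 := by rw [← rr_sq]; exact pow_ne_zero 2 (rr_pos hp).ne'
  have h := HasFDerivAt.sqrt (f := fun q : ℝ × ℝ => q.1 ^ 2 + q.2 ^ 2)
    ((hasFDerivAt_fst.pow 2).add (hasFDerivAt_snd.pow 2)) h0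
  refine h.congr_fderiv (ContinuousLinearMap.ext fun v => ?_)
  simp only [one_div, mul_inv_rev, Nat.add_one_sub_one, pow_one, nsmul_eq_mul, Nat.cast_ofNat,
    smul_add, add_apply, smul_apply, coe_fst', smul_eq_mul, coe_snd', rr]
  field_simp

theorem hasFDerivAt_cosT {p : ℝ × ℝ} (hp : p ≠ 0) :
    HasFDerivAt cosT ((rr p ^ 3)⁻¹ • (-(p.1 * p.2) • fst ℝ ℝ ℝ + p.1 ^ 2 • snd ℝ ℝ ℝ)) p := by
  have hr := rr_pos hp
  have h := hasFDerivAt_snd.mul ((hasDerivAt_inv hr.ne').comp_hasFDerivAt p (hasFDerivAt_rr hp))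
  refine h.congr_fderiv (ContinuousLinearMap.ext fun v => ?_)
  simp only [smul_add, neg_smul, smul_neg, Function.comp_apply, add_apply, neg_apply, smul_apply,
    coe_fst', smul_eq_mul, coe_snd']
  field_simp
  linear_combination v.2 * rr_sq p

theorem Y0_eventuallyEq_kerrY (J : ℝ) {p : ℝ × ℝ} (hp : p ≠ 0) :
    Y0 J =ᶠ[𝓝 p] fun q => kerrY J (cosT q) (rr q) := by
  filter_upwards [isOpen_ne.mem_nhds hp] with q hq
  rw [Y0, kerrY, sin2T_eq_one_sub_cosT_sq hq]
  rfl

theorem gradSq_Y0 (J : ℝ) {p : ℝ × ℝ} (hp : p ≠ 0) :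
    gradSq (Y0 J) p = kerrYDerivC J (cosT p) (rr p) ^ 2 * sin2T p / rr p ^ 2
      + kerrYDerivR J (cosT p) (rr p) ^ 2 := by
  have hr := rr_pos hp
  have hY := ((hasFDerivAt_cosT hp).kerrY J (hasFDerivAt_rr hp)
    (kerrSigma_pos J _ hr).ne').congr_of_eventuallyEq (Y0_eventuallyEq_kerrY J hp)
  rw [gradSq, pdR, pdZ, hY.fderiv, sin2T]
  simp only [smul_add, add_apply, smul_apply, coe_fst', smul_eq_mul, mul_one, mul_neg, coe_snd',
    mul_zero, add_zero, zero_add]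
  field_simp
  linear_combination (-(p.1 ^ 2 * kerrYDerivC J (cosT p) (rr p) ^ 2
    + rr p ^ 4 * kerrYDerivR J (cosT p) (rr p) ^ 2)) * rr_sq p

theorem abs_kerrYDerivC_le (J : ℝ) {c r : ℝ} (hc : c ^ 2 ≤ 1) (hr : 0 < r) :
    |kerrYDerivC J c r| ≤ 18 * |J| * (1 - c ^ 2) := by
  have hS : 0 < kerrSigma J c r := kerrSigma_pos J c hr
  have hA : 0 ≤ |J| := abs_nonneg J
  have ht : |J| / kerrSigma J c r ≤ 1 := div_le_one_of_le₀ (abs_le_kerrSigma J c hr.le) hS.le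
  obtain ⟨u, hu, hu0, huA⟩ : ∃ u, u = |J| * (|J| / kerrSigma J c r) ∧ 0 ≤ u ∧ u ≤ |J| :=
    ⟨_, rfl, by positivity, mul_le_of_le_one_right hA ht⟩
  obtain ⟨w, hw, hw0, hwA⟩ : ∃ w, w = u * (|J| / kerrSigma J c r) ∧ 0 ≤ w ∧ w ≤ |J| :=
    ⟨_, rfl, by positivity, (mul_le_of_le_one_right hu0 ht).trans huA⟩
  have h : kerrYDerivC J c r =
      (1 - c ^ 2) * (-6 * J - 2 * u * (1 - 5 * c ^ 2) + 4 * w * c ^ 2 * (1 - c ^ 2)) := by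
    rw [kerrYDerivC, hw, hu, ← sq_abs J]
    field_simp
  have hs : 0 ≤ 1 - c ^ 2 := by linarith
  have hc0 := sq_nonneg c
  rw [h, abs_mul, abs_of_nonneg hs, mul_comm]
  gcongr
  have hJ := abs_le.1 (le_refl |J|)
  rw [abs_le]
  constructor <;> nlinarith [mul_nonneg hu0 hc0, mul_nonneg hu0 hs,
    mul_nonneg hw0 (mul_nonneg hc0 hs), mul_nonneg hw0 (mul_nonneg hc0 hc0)]

theorem abs_kerrYDerivR_le (J : ℝ) {c r : ℝ} (hc : c ^ 2 ≤ 1) (hr : 0 < r) :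
    |kerrYDerivR J c r| ≤ 4 * |J| * (1 - c ^ 2) / r := by
  have hS : 0 < kerrSigma J c r := kerrSigma_pos J c hr
  have hs : 0 ≤ 1 - c ^ 2 := by linarith
  have ha := Real.sqrt_nonneg |J|
  have hc1 : |c| ≤ 1 := (sq_le_one_iff_abs_le_one c).1 hc
  have hRS : r * (r + √|J|) ≤ kerrSigma J c r := by
    unfold kerrSigma; nlinarith [abs_nonneg J, sq_nonneg c]
  have hcS : |J| * (|c| * (1 - c ^ 2)) ≤ kerrSigma J c r :=
    (mul_le_of_le_one_right (abs_nonneg J) (mul_le_one₀ hc1 hs (by nlinarith [sq_nonneg c]))).trans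
      (abs_le_kerrSigma J c hr.le)
  have habs : |kerrYDerivR J c r| = 4 * |J| ^ 2 * |c| * (1 - c ^ 2) ^ 2 * (r + √|J|)
      / kerrSigma J c r ^ 2 := by
    rw [kerrYDerivR, abs_div, abs_of_pos (pow_pos hS 2)]
    simp only [abs_mul, abs_pow, sq_abs, abs_of_nonneg hs, abs_of_nonneg (add_nonneg hr.le ha)]
    norm_num
  rw [habs, div_le_div_iff₀ (pow_pos hS 2) hr]
  calc 4 * |J| ^ 2 * |c| * (1 - c ^ 2) ^ 2 * (r + √|J|) * r
      = 4 * |J| * (1 - c ^ 2) * ((|J| * (|c| * (1 - c ^ 2))) * (r * (r + √|J|))) := by ring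
    _ ≤ 4 * |J| * (1 - c ^ 2) * (kerrSigma J c r * kerrSigma J c r) := by gcongr
    _ = 4 * |J| * (1 - c ^ 2) * kerrSigma J c r ^ 2 := by ring

theorem abs_mul_sin2T_le_X0 (J : ℝ) {p : ℝ × ℝ} (hp : p ≠ 0) : |J| * sin2T p ≤ X0 J p := by
  have hr := rr_pos hp
  have hs := sin2T_eq_one_sub_cosT_sq hp
  have hs0 := sin2T_nonneg p
  have hs1 : sin2T p ≤ 1 := by nlinarith [sq_nonneg (cosT p)]
  have hS : 0 < Sg J p := kerrSigma_pos J _ hr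
  have hSle : Sg J p ≤ rt J p ^ 2 + |J| := by
    unfold Sg; nlinarith [abs_nonneg J]
  have hrR : rr p ^ 2 ≤ rt J p ^ 2 := by
    unfold rt; nlinarith [Real.sqrt_nonneg |J|]
  have hnum : |J| * Sg J p ≤ (rt J p ^ 2 + |J|) ^ 2 - rr p ^ 2 * |J| * sin2T p := by
    nlinarith [abs_nonneg J, mul_le_mul_of_nonneg_left hSle (abs_nonneg J),
      mul_le_mul_of_nonneg_left (mul_le_of_le_one_right (sq_nonneg (rr p)) hs1) (abs_nonneg J)]
  rw [X0, le_div_iff₀ hS]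
  nlinarith [mul_le_mul_of_nonneg_right hnum hs0]

theorem extremeKerr_Y0_gradient_bound_general (J : ℝ) :
    ∃ C₁ > (0 : ℝ), ∀ p : ℝ × ℝ, 0 < p.1 →
      gradSq (Y0 J) p ≤ C₁ * (X0 J p) ^ 2 * ((rr p) ^ 2)⁻¹ := by
  refine ⟨340, by norm_num, fun p hp => ?_⟩
  have hp0 : p ≠ 0 := fun h => hp.ne' (by simp [h])
  have hr := rr_pos hp0
  have hs := sin2T_eq_one_sub_cosT_sq hp0
  have hs0 := sin2T_nonneg p
  have hc : cosT p ^ 2 ≤ 1 := by linarith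
  have hYc := abs_le.1 (abs_kerrYDerivC_le J hc hr)
  have hYr := abs_le.1 (abs_kerrYDerivR_le J hc hr)
  rw [← hs] at hYc hYr
  calc gradSq (Y0 J) p
      = kerrYDerivC J (cosT p) (rr p) ^ 2 * sin2T p / rr p ^ 2
          + kerrYDerivR J (cosT p) (rr p) ^ 2 := gradSq_Y0 J hp0
    _ ≤ (18 * |J| * sin2T p) ^ 2 * 1 / rr p ^ 2 + (4 * |J| * sin2T p / rr p) ^ 2 := by
        gcongr ?_ * ?_ / _ + ?_
        · exact sq_le_sq' hYc.1 hYc.2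
        · linarith [sq_nonneg (cosT p)]
        · exact sq_le_sq' hYr.1 hYr.2
    _ = 340 * (|J| * sin2T p) ^ 2 * (rr p ^ 2)⁻¹ := by field_simp; ring
    _ ≤ 340 * X0 J p ^ 2 * (rr p ^ 2)⁻¹ := by
        gcongr
        exact abs_mul_sin2T_le_X0 J hp0

/-- There exists C₁ > 0, depending only on J, such that for all (ρ, z)
with ρ > 0 the extreme Kerr data satisfy |∂Y₀|² ≤ C₁ X₀² r⁻². -/
theorem extremeKerr_Y0_gradient_bound (J : ℝ) (hJ : J ≠ 0) :
    ∃ C₁ > (0 : ℝ), ∀ p : ℝ × ℝ, 0 < p.1 →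
      gradSq (Y0 J) p ≤ C₁ * (X0 J p) ^ 2 * ((rr p) ^ 2)⁻¹ :=
  extremeKerr_Y0_gradient_bound_general J
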